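/- (Rotated error and projection probability, [E,H]=0, {E,X}=0 case.) Let E be a Hermitian N×N matrix with E² = I, E·H = H·E and E·X = −X·E, and let ψ̄ be a unit vector with P0·ψ̄ = ψ̄. Then for all t: (i) E(t) = U(t)†·E·U(t) = cos(2ωt)·E + i·sin(2ωt)·exp(2i·θ̄(t)·H)·E·X, and (ii) ⟨E(t)·ψ̄, (E·X·P0·X·E)·E(t)·ψ̄⟩ = sin²(2ωt). -/

import Mathlib

/-!
Everything rests on the exponential of an involution, `exp (z • a) = cosh z + sinh z • a`:
conjugation by `exp (z • a)` fixes whatever commutes with `a` and, past whatever anticommutes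
with `a`, doubles the exponent. So in `U(t)† E U(t)` the rotation generated by `H` drops out,
the one generated by `X` turns `E` into `E exp(2iωt X) = cos(2ωt) E + i sin(2ωt) E X`, and the
last factor moves `exp(2iθ̄ H)` in front of `E X`.

For (ii), `P0 X P0 = 0` removes the cosine part of `P0 X E E(t) P0 = i sin(2ωt) exp(-2iθ̄ H) P0`,
and multiplying it by its mirror image `P0 E(t) E X P0` gives `sin²(2ωt) P0`.
-/

open Matrix NormedSpace
open scoped Nat

section Involution

variable {𝔸 : Type*} [Ring 𝔸] [Algebra ℂ 𝔸] {a b : 𝔸}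

theorem smul_pow_eq_of_mul_self_eq_one (ha : a * a = 1) (z : ℂ) (n : ℕ) :
    (z • a) ^ n = ((z ^ n + (-z) ^ n) / 2) • 1 + ((z ^ n - (-z) ^ n) / 2) • a := by
  have ha2 : a ^ 2 = 1 := by rw [sq, ha]
  rw [smul_pow]
  rcases Nat.even_or_odd' n with ⟨k, rfl | rfl⟩
  · rw [Even.neg_pow ⟨k, two_mul k⟩, pow_mul a 2 k, ha2, one_pow]
    module
  · rw [Odd.neg_pow ⟨k, rfl⟩, pow_succ a, pow_mul a 2 k, ha2, one_pow, one_mul]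
    module

variable [TopologicalSpace 𝔸] [IsTopologicalRing 𝔸] [T2Space 𝔸]

theorem star_exp_smul [StarRing 𝔸] [StarModule ℂ 𝔸] [ContinuousStar 𝔸] (ha : IsSelfAdjoint a)
    (z : ℂ) : star (exp (z • a)) = exp (star z • a) := by
  rw [star_exp, star_smul, ha.star_eq]

variable [ContinuousSMul ℂ 𝔸]

theorem exp_smul_of_mul_self_eq_one (ha : a * a = 1) (z : ℂ) :
    exp (z • a) = Complex.cosh z • 1 + Complex.sinh z • a := by
  have hexp (w : ℂ) : HasSum (fun n : ℕ => w ^ n / n !) (Complex.exp w) :=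
    Complex.exp_eq_exp_ℂ ▸ expSeries_div_hasSum_exp w
  have hsum := (((hexp z).add (hexp (-z))).div_const 2).smul_const (1 : 𝔸) |>.add
    ((((hexp z).sub (hexp (-z))).div_const 2).smul_const a)
  rw [exp_eq_tsum ℂ, Complex.cosh, Complex.sinh, ← hsum.tsum_eq]
  refine tsum_congr fun n => ?_
  rw [smul_pow_eq_of_mul_self_eq_one ha]
  module

theorem exp_smul_mul_exp_smul_of_mul_self_eq_one (ha : a * a = 1) (z w : ℂ) :
    exp (z • a) * exp (w • a) = exp ((z + w) • a) := by
  simp only [exp_smul_of_mul_self_eq_one ha, Complex.cosh_add, Complex.sinh_add, add_mul, mul_add,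
    smul_mul_smul_comm, one_mul, mul_one, ha]
  module

theorem mul_exp_smul_of_anticommute (ha : a * a = 1) (hab : b * a = -(a * b)) (z : ℂ) :
    b * exp (z • a) = exp ((-z) • a) * b := by
  rw [exp_smul_of_mul_self_eq_one ha, exp_smul_of_mul_self_eq_one ha, Complex.cosh_neg,
    Complex.sinh_neg]
  simp only [mul_add, add_mul, mul_smul_comm, smul_mul_assoc, mul_one, one_mul, hab]
  module

theorem exp_smul_mul_mul_exp_smul_of_commute (ha : a * a = 1) (hab : Commute b a) {z w : ℂ}
    (hzw : z + w = 0) : exp (z • a) * b * exp (w • a) = b := by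
  rw [mul_assoc, ((hab.smul_right w).exp_right).eq, ← mul_assoc,
    exp_smul_mul_exp_smul_of_mul_self_eq_one ha, hzw, zero_smul, exp_zero, one_mul]

theorem exp_smul_mul_mul_exp_smul_of_anticommute (ha : a * a = 1) (hab : b * a = -(a * b))
    (z w : ℂ) : exp (z • a) * b * exp (w • a) = exp ((z - w) • a) * b := by
  rw [mul_assoc, mul_exp_smul_of_anticommute ha hab, ← mul_assoc,
    exp_smul_mul_exp_smul_of_mul_self_eq_one ha, sub_eq_add_neg]

theorem proj_mul_mul_mul_proj_eq_neg_sq_smul {h x e p r : 𝔸} (hh : h * h = 1) (hx : x * x = 1)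
    (he : e * e = 1) (hhx : h * x = -(x * h)) (heh : Commute e h) (hex : e * x = -(x * e))
    (hp : p * p = p) (hph : Commute p h) (hpxp : p * x * p = 0) (c s d : ℂ)
    (hr : r = c • e + s • (exp (d • h) * e * x)) :
    p * r * (e * x * p * x * e) * r * p = -(s ^ 2) • p := by
  set g := exp (d • h)
  have hpg : p * g = g * p := ((hph.smul_right d).exp_right).eq
  have hpg' : p * exp ((-d) • h) = exp ((-d) • h) * p := ((hph.smul_right _).exp_right).eq
  have hege : e * g * e = g := by rw [((heh.smul_right d).exp_right).eq, mul_assoc, he, mul_one]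
  have hxgx : x * g * x = exp ((-d) • h) := by
    rw [mul_exp_smul_of_anticommute hh (by rw [hhx, neg_neg]), mul_assoc, hx, mul_one]
  have hexex : e * x * e * x = -1 := by
    rw [hex, neg_mul, neg_mul, mul_assoc x, he, mul_one, hx]
  have hleft : p * r * e * x * p = -(s • (g * p)) := calc
    p * r * e * x * p = c • (p * (e * e) * x * p) + s • (p * g * (e * x * e * x) * p) := by
      rw [hr]; simp only [add_mul, mul_add, smul_mul_assoc, mul_smul_comm, mul_assoc]
    _ = -(s • (g * p)) := by
      rw [he, mul_one, hpxp, hexex, mul_neg_one, neg_mul, hpg, mul_assoc, hp, smul_zero, zero_add,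
        smul_neg]
  have hright : p * x * e * r * p = s • (exp ((-d) • h) * p) := calc
    p * x * e * r * p = c • (p * x * (e * e) * p) + s • (p * (x * (e * g * e) * x) * p) := by
      rw [hr]; simp only [add_mul, mul_add, smul_mul_assoc, mul_smul_comm, mul_assoc]
    _ = s • (exp ((-d) • h) * p) := by
      rw [he, mul_one, hpxp, hege, hxgx, hpg', mul_assoc, hp, smul_zero, zero_add]
  calc p * r * (e * x * p * x * e) * r * p = (p * r * e * x * p) * (p * x * e * r * p) := by
        simp only [mul_assoc, ← mul_assoc p p, hp]
    _ = -(s ^ 2) • p := by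
        rw [hleft, hright, neg_mul, smul_mul_smul_comm, mul_assoc, ← mul_assoc p, hpg', mul_assoc,
          hp, ← mul_assoc, exp_smul_mul_exp_smul_of_mul_self_eq_one hh, add_neg_cancel, zero_smul,
          exp_zero, one_mul, sq, neg_smul]

variable [StarRing 𝔸] [StarModule ℂ 𝔸] [ContinuousStar 𝔸]

open Complex in
theorem star_mul_mul_eq_cos_smul_add_sin_smul {h x e u : 𝔸} (hh : h * h = 1) (hx : x * x = 1)
    (hh_sa : IsSelfAdjoint h) (hx_sa : IsSelfAdjoint x) (hhx : h * x = -(x * h)) (heh : Commute e h)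
    (hex : e * x = -(x * e)) (α β γ : ℝ)
    (hu : u = exp ((I * α) • h) * exp ((I * β) • x) * exp ((-(I * γ)) • h)) :
    star u * e * u = (Real.cos (2 * β) : ℂ) • e
      + (I * Real.sin (2 * β)) • (exp ((2 * I * γ) • h) * e * x) := by
  have hstar (r : ℝ) : star (I * r) = -(I * r) := by
    rw [star_def, map_mul, conj_I, conj_ofReal, neg_mul]
  have hxe : x * e = -(e * x) := by rw [hex, neg_neg]
  have hexh : e * x * h = -(h * (e * x)) := by
    rw [mul_assoc, ← neg_eq_iff_eq_neg.mpr hhx, mul_neg, ← mul_assoc, heh.eq, mul_assoc]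
  have hexp_x : exp ((-(I * β) - I * β) • x)
      = (Real.cos (2 * β) : ℂ) • 1 - (Real.sin (2 * β) * I) • x := by
    rw [exp_smul_of_mul_self_eq_one hx,
      show -(I * β) - I * β = -((2 * β : ℝ) * I) by push_cast; ring, cosh_neg, sinh_neg,
      cosh_mul_I, sinh_mul_I, ← ofReal_cos, ← ofReal_sin, neg_smul, sub_eq_add_neg]
  calc star u * e * u
      = exp ((I * γ) • h) * (exp ((-(I * β)) • x) * (exp ((-(I * α)) • h) * e * exp ((I * α) • h))
          * exp ((I * β) • x)) * exp ((-(I * γ)) • h) := by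
        simp only [hu, star_mul, mul_assoc]
        simp only [star_exp_smul hh_sa, star_exp_smul hx_sa, star_neg, hstar, neg_neg]
    _ = exp ((I * γ) • h) * (exp ((-(I * β) - I * β) • x) * e) * exp ((-(I * γ)) • h) := by
        rw [exp_smul_mul_mul_exp_smul_of_commute hh heh (neg_add_cancel _),
          exp_smul_mul_mul_exp_smul_of_anticommute hx hex]
    _ = (Real.cos (2 * β) : ℂ) • (exp ((I * γ) • h) * e * exp ((-(I * γ)) • h))
          + (I * Real.sin (2 * β)) • (exp ((I * γ) • h) * (e * x) * exp ((-(I * γ)) • h)) := by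
        rw [hexp_x]
        simp only [sub_mul, smul_mul_assoc, one_mul, hxe, mul_sub, mul_smul_comm, mul_neg, neg_mul]
        module
    _ = _ := by
        rw [exp_smul_mul_mul_exp_smul_of_commute hh heh (add_neg_cancel _),
          exp_smul_mul_mul_exp_smul_of_anticommute hh hexh, sub_neg_eq_add, ← two_mul,
          ← mul_assoc 2, ← mul_assoc]

end Involution

theorem Matrix.star_mulVec_dotProduct_mulVec_mulVec {n α : Type*} [Fintype n] [NonUnitalSemiring α]
    [StarRing α] {A B P : Matrix n n α} {ψ : n → α} (hP : Pᴴ = P) (hψ : P *ᵥ ψ = ψ) :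
    star (A *ᵥ ψ) ⬝ᵥ (B *ᵥ (A *ᵥ ψ)) = star ψ ⬝ᵥ ((P * Aᴴ * B * A * P) *ᵥ ψ) := by
  conv_lhs => rw [← hψ, star_mulVec, star_mulVec, hP]
  simp only [dotProduct_mulVec, mulVec_mulVec, vecMul_vecMul, Matrix.mul_assoc]

theorem rotated_error_class1_general {N : ℕ}
    (H X : Matrix (Fin N) (Fin N) ℂ)
    (hHh : Hᴴ = H) (hXh : Xᴴ = X)
    (hH2 : H * H = 1) (hX2 : X * X = 1) (hHX : H * X = -(X * H))
    (ω ωH : ℝ)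
    (θbar : ℝ → ℝ)
    (V U : ℝ → Matrix (Fin N) (Fin N) ℂ)
    (hV : ∀ t : ℝ, V t = NormedSpace.exp ((Complex.I * (ωH * t)) • H) *
      NormedSpace.exp ((Complex.I * (ω * t)) • X))
    (hU : ∀ t : ℝ, U t = V t * NormedSpace.exp ((-(Complex.I * (θbar t : ℝ))) • H))
    (P0 : Matrix (Fin N) (Fin N) ℂ)
    (hP0proj : P0 * P0 = P0) (hP0herm : P0ᴴ = P0)
    (hP0H : P0 * H = H * P0) (hPXP : P0 * X * P0 = 0)
    (E : Matrix (Fin N) (Fin N) ℂ)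
    (hEh : Eᴴ = E) (hE2 : E * E = 1)
    (hEH : E * H = H * E) (hEX : E * X = -(X * E))
    (Et : ℝ → Matrix (Fin N) (Fin N) ℂ)
    (hEt : ∀ t : ℝ, Et t = (U t)ᴴ * E * U t)
    (ψ : Fin N → ℂ) (hψ : star ψ ⬝ᵥ ψ = 1) (hPψ : P0 *ᵥ ψ = ψ) :
    ∀ t : ℝ,
      Et t = ((Real.cos (2 * ω * t) : ℝ) : ℂ) • E
          + (Complex.I * ((Real.sin (2 * ω * t) : ℝ) : ℂ)) •
              (NormedSpace.exp ((2 * Complex.I * (θbar t : ℝ)) • H) * E * X) ∧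
      star (Et t *ᵥ ψ) ⬝ᵥ ((E * X * P0 * X * E) *ᵥ (Et t *ᵥ ψ))
        = ((Real.sin (2 * ω * t) ^ 2 : ℝ) : ℂ) := by
  intro t
  rw [mul_assoc 2 ω t]
  have hEt_eq := (hEt t).trans <| star_mul_mul_eq_cos_smul_add_sin_smul hH2 hX2 hHh hXh hHX hEH hEX
    (ωH * t) (ω * t) (θbar t) (by rw [hU, hV]; push_cast; rfl)
  have hEt_herm : (Et t)ᴴ = Et t := by
    rw [hEt, conjTranspose_mul, conjTranspose_mul, conjTranspose_conjTranspose, hEh,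
      Matrix.mul_assoc]
  refine ⟨hEt_eq, ?_⟩
  rw [star_mulVec_dotProduct_mulVec_mulVec hP0herm hPψ, hEt_herm,
    proj_mul_mul_mul_proj_eq_neg_sq_smul hH2 hX2 hE2 hHX hEH hEX hP0proj hP0H hPXP _ _ _ hEt_eq,
    smul_mulVec, hPψ, dotProduct_smul, hψ, smul_eq_mul, mul_one, mul_pow, Complex.I_sq]
  push_cast
  ring

/-- Rotated error and projection probability for `[E,H] = 0`, `{E,X} = 0`:
(i) `E(t) = cos(2ωt)·E + i·sin(2ωt)·exp(2i θ̄(t) H)·E·X`, and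
(ii) `⟨E(t)ψ̄, (E·X·P0·X·E)·E(t)ψ̄⟩ = sin²(2ωt)`. -/
theorem rotated_error_class1 {N : ℕ} (hN : 0 < N)
    (H X : Matrix (Fin N) (Fin N) ℂ)
    (hHh : Hᴴ = H) (hXh : Xᴴ = X)
    (hH2 : H * H = 1) (hX2 : X * X = 1) (hHX : H * X = -(X * H))
    (ω θ ωH : ℝ) (hω : 0 < ω) (hωH : ωH = θ * ω / (2 * Real.pi))
    (θbar : ℝ → ℝ) (hθbar : ∀ t, θbar t = θ / (4 * Real.pi) * Real.sin (2 * ω * t))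
    (V U : ℝ → Matrix (Fin N) (Fin N) ℂ)
    (hV : ∀ t : ℝ, V t = NormedSpace.exp ((Complex.I * (ωH * t)) • H) *
      NormedSpace.exp ((Complex.I * (ω * t)) • X))
    (hU : ∀ t : ℝ, U t = V t * NormedSpace.exp ((-(Complex.I * (θbar t : ℝ))) • H))
    (P0 : Matrix (Fin N) (Fin N) ℂ)
    (hP0proj : P0 * P0 = P0) (hP0herm : P0ᴴ = P0)
    (hP0H : P0 * H = H * P0) (hPXP : P0 * X * P0 = 0) (hPHXP : P0 * H * X * P0 = 0)
    (E : Matrix (Fin N) (Fin N) ℂ)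
    (hEh : Eᴴ = E) (hE2 : E * E = 1)
    (hEH : E * H = H * E) (hEX : E * X = -(X * E))
    (Et : ℝ → Matrix (Fin N) (Fin N) ℂ)
    (hEt : ∀ t : ℝ, Et t = (U t)ᴴ * E * U t)
    (ψ : Fin N → ℂ) (hψ : star ψ ⬝ᵥ ψ = 1) (hPψ : P0 *ᵥ ψ = ψ) :
    ∀ t : ℝ,
      Et t = ((Real.cos (2 * ω * t) : ℝ) : ℂ) • E
          + (Complex.I * ((Real.sin (2 * ω * t) : ℝ) : ℂ)) •
              (NormedSpace.exp ((2 * Complex.I * (θbar t : ℝ)) • H) * E * X) ∧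
      star (Et t *ᵥ ψ) ⬝ᵥ ((E * X * P0 * X * E) *ᵥ (Et t *ᵥ ψ))
        = ((Real.sin (2 * ω * t) ^ 2 : ℝ) : ℂ) :=
  rotated_error_class1_general H X hHh hXh hH2 hX2 hHX ω ωH θbar V U hV hU P0 hP0proj hP0herm hP0H
    hPXP E hEh hE2 hEH hEX Et hEt ψ hψ hPψ
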